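/- Let n ≥ 2, k ≥ 1, m ≥ 0, let S_1, …, S_n ⊆ S be action sets, and set β := min(m/k, 1). Let (x_i^ag, z_i^ag)_{i=1}^n be any augmented greedy profile for (f, (S_i), k, m). Then for every feasible profile (y_1, …, y_n) with y_i ∈ (S_i)^k, f(x_1^ag ∪ … ∪ x_n^ag) ≥ f(y_1 ∪ … ∪ y_n) / (2 − β^{n−1}/(∑_{i=0}^{n−1} β^i)). In particular f(x^ag) ≥ OPT(f,(S_i),k) / (2 − β^{n−1}/(∑_{i=0}^{n−1} β^i)). -/
import Mathlib


open Finset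

variable {α : Type*}

/-- `f` is monotone on finsets. -/
def IsMonotoneFn (f : Finset α → ℝ) : Prop := ∀ A B : Finset α, A ⊆ B → f A ≤ f B

/-- `f` is submodular. -/
def IsSubmodularFn [DecidableEq α] (f : Finset α → ℝ) : Prop :=
  ∀ A B : Finset α, A ⊆ B → ∀ s ∉ B, f (insert s A) - f A ≥ f (insert s B) - f B

/-- Marginal contribution Δ(A|B) = f(A ∪ B) − f(B). -/
def marg [DecidableEq α] (f : Finset α → ℝ) (A B : Finset α) : ℝ := f (A ∪ B) - f B

/-- Δ^l(A|B): best marginal of a subset of `A` of size at most `l`. -/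
noncomputable def margSup [DecidableEq α] (f : Finset α → ℝ) (l : ℕ) (A B : Finset α) : ℝ :=
  (A.powerset.filter (fun C => C.card ≤ l)).sup' ⟨∅, by simp⟩ (fun C => marg f C B)

/-- Union of the first `i` sets: x_0 ∪ ⋯ ∪ x_{i-1}. -/
def pref [DecidableEq α] (x : ℕ → Finset α) (i : ℕ) : Finset α := (Finset.range i).biUnion x

/-- A nominal greedy profile. -/
def NomGreedy [DecidableEq α] (f : Finset α → ℝ) (Ss : ℕ → Finset α) (k n : ℕ)
    (x : ℕ → Finset α) : Prop :=
  ∀ i < n, x i ⊆ Ss i ∧ (x i).card ≤ k ∧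
    ∀ c : Finset α, c ⊆ Ss i → c.card ≤ k → f (c ∪ pref x i) ≤ f (x i ∪ pref x i)

/-- An augmented greedy profile. -/
def AugGreedy [DecidableEq α] (f : Finset α → ℝ) (Ss : ℕ → Finset α) (k m n : ℕ)
    (x z : ℕ → Finset α) : Prop :=
  ∀ i < n,
    (x i ⊆ Ss i ∪ pref z i ∧ (x i).card ≤ k ∧
      ∀ c : Finset α, c ⊆ Ss i ∪ pref z i → c.card ≤ k →
        f (c ∪ pref x i) ≤ f (x i ∪ pref x i)) ∧
    ∃ zk zr : Finset α,
      z i = zk ∪ zr ∧ zk ⊆ Ss i ∧ zk.card ≤ min k m ∧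
      (∀ w : Finset α, w ⊆ Ss i → w.card ≤ min k m →
        marg f w (pref x (i + 1)) ≤ marg f zk (pref x (i + 1))) ∧
      zr ⊆ Ss i ∧ zr.card ≤ m - k

/-- The optimal value OPT(f, (S_i), k) over feasible profiles with n agents. -/
noncomputable def OPTval [DecidableEq α] [Fintype α] (f : Finset α → ℝ) (Ss : ℕ → Finset α)
    (n k : ℕ) : ℝ :=
  ((Finset.univ : Finset (Fin n → Finset α)).filter
      (fun y => ∀ i : Fin n, y i ⊆ Ss (i : ℕ) ∧ (y i).card ≤ k)).sup'
    ⟨(fun _ => ∅), by simp⟩ (fun y => f (Finset.univ.biUnion (fun i => y i)))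


section AuxLemmas

variable [DecidableEq α] {f : Finset α → ℝ}

lemma mgain_mono (hmono : IsMonotoneFn f) (hsub : IsSubmodularFn f)
    {C C' : Finset α} (h : C ⊆ C') (a : α) :
    f (insert a C') - f C' ≤ f (insert a C) - f C := by
  by_cases ha : a ∈ C'
  · rw [Finset.insert_eq_self.2 ha]
    have := hmono C (insert a C) (Finset.subset_insert _ _)
    linarith
  · exact hsub C C' h a ha

lemma marg_nonneg (hmono : IsMonotoneFn f) (A B : Finset α) : 0 ≤ marg f A B := by
  have := hmono B (A ∪ B) Finset.subset_union_right
  simpa [marg] using this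

lemma marg_insert (g : Finset α → ℝ) (a : α) (A B : Finset α) :
    marg g (insert a A) B = (g (insert a (A ∪ B)) - g (A ∪ B)) + marg g A B := by
  simp [marg, Finset.insert_union]

lemma marg_mono_base (hmono : IsMonotoneFn f) (hsub : IsSubmodularFn f)
    {B B' : Finset α} (h : B ⊆ B') (A : Finset α) : marg f A B' ≤ marg f A B := by
  induction A using Finset.induction_on with
  | empty => simp [marg]
  | @insert a A ha ih =>
    rw [marg_insert, marg_insert]
    have h2 := mgain_mono hmono hsub (Finset.union_subset_union_right h : A ∪ B ⊆ A ∪ B') a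
    linarith

lemma marg_le_sum (hmono : IsMonotoneFn f) (hsub : IsSubmodularFn f) (A B : Finset α) :
    marg f A B ≤ ∑ e ∈ A, (f (insert e B) - f B) := by
  induction A using Finset.induction_on with
  | empty => simp [marg]
  | @insert a A ha ih =>
    rw [marg_insert, Finset.sum_insert ha]
    have h2 := mgain_mono hmono hsub (Finset.subset_union_right : B ⊆ A ∪ B) a
    linarith

lemma exists_subset_frac (hmono : IsMonotoneFn f) (hsub : IsSubmodularFn f) :
    ∀ (m' : ℕ) (w B : Finset α), m' ≤ w.card →
    ∃ w' : Finset α, w' ⊆ w ∧ w'.card = m' ∧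
      (m' : ℝ) / w.card * marg f w B ≤ marg f w' B := by
  intro m'
  induction m' with
  | zero =>
    intro w B _
    refine ⟨∅, Finset.empty_subset _, Finset.card_empty, ?_⟩
    simp [marg]
  | succ m' ih =>
    intro w B hm
    have hw : w.Nonempty := Finset.card_pos.1 (Nat.lt_of_lt_of_le (Nat.succ_pos m') hm)
    obtain ⟨e, he, hemax⟩ := Finset.exists_max_image w (fun e => f (insert e B) - f B) hw
    set r : ℕ := w.card with hr
    have hr1 : 1 ≤ r := Nat.one_le_iff_ne_zero.2 (Finset.card_ne_zero_of_mem he)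
    have hsum : marg f w B ≤ ∑ e' ∈ w, (f (insert e' B) - f B) := marg_le_sum hmono hsub w B
    have hsum2 : ∑ e' ∈ w, (f (insert e' B) - f B) ≤ (r : ℝ) * (f (insert e B) - f B) := by
      calc ∑ e' ∈ w, (f (insert e' B) - f B) ≤ ∑ _e' ∈ w, (f (insert e B) - f B) :=
            Finset.sum_le_sum (fun e' he' => hemax e' he')
        _ = (r : ℝ) * (f (insert e B) - f B) := by rw [Finset.sum_const, hr]; simp
    set x : ℝ := f (insert e B) - f B with hx
    set V : ℝ := marg f w B with hV
    have hxavg : V ≤ (r : ℝ) * x := le_trans hsum hsum2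
    have hcard : m' ≤ (w.erase e).card := by
      rw [Finset.card_erase_of_mem he]
      omega
    obtain ⟨w'', hw''sub, hw''card, hw''ineq⟩ := ih (w.erase e) (insert e B) hcard
    have herase : (w.erase e) ∪ insert e B = w ∪ B := by
      rw [Finset.union_insert, ← Finset.insert_union, Finset.insert_erase he]
    have hVx : marg f (w.erase e) (insert e B) = V - x := by
      simp only [marg, herase, hx, hV]; ring
    have hVxnn : 0 ≤ V - x := hVx ▸ marg_nonneg hmono (w.erase e) (insert e B)
    have hew'' : e ∉ w'' := fun hc => (Finset.notMem_erase e w) (hw''sub hc)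
    refine ⟨insert e w'', Finset.insert_subset he
      (hw''sub.trans (Finset.erase_subset e w)),
      by rw [Finset.card_insert_of_notMem hew'', hw''card], ?_⟩
    have hsplit : marg f (insert e w'') B = marg f w'' (insert e B) + x := by
      simp only [marg, Finset.insert_union, Finset.union_insert, hx]; ring
    have hec : ((w.erase e).card : ℝ) = (r : ℝ) - 1 := by
      rw [Finset.card_erase_of_mem he, Nat.cast_sub hr1]; simp
    rw [hec, hVx] at hw''ineq
    have hrr1 : (1:ℝ) ≤ (r:ℝ) := by exact_mod_cast hr1
    have hmr : (m':ℝ) + 1 ≤ (r:ℝ) := by exact_mod_cast hm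
    have key : ((m':ℝ) + 1) / (r:ℝ) * V ≤ (m':ℝ) / ((r:ℝ) - 1) * (V - x) + x := by
      rcases eq_or_lt_of_le hrr1 with heq | hlt
      · have hm0 : (m':ℝ) = 0 := by
          have h1 : (m':ℝ) + 1 ≤ 1 := heq ▸ hmr
          have h2 : (0:ℝ) ≤ (m':ℝ) := Nat.cast_nonneg m'
          linarith
        rw [hm0, ← heq]
        rw [← heq] at hxavg
        simp only [zero_div, zero_mul, zero_add, div_one]
        linarith
      · have hr0 : (0:ℝ) < (r:ℝ) := by linarith
        have hr10 : (0:ℝ) < (r:ℝ) - 1 := by linarith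
        have expand : (m':ℝ) / ((r:ℝ) - 1) * (V - x) + x - ((m':ℝ) + 1) / (r:ℝ) * V
            = ((r:ℝ) - 1 - (m':ℝ)) * ((r:ℝ) * x - V) / ((r:ℝ) * ((r:ℝ) - 1)) := by
          field_simp
          ring
        have hnum : 0 ≤ ((r:ℝ) - 1 - (m':ℝ)) * ((r:ℝ) * x - V) :=
          mul_nonneg (by linarith) (by linarith [hxavg])
        have hq : 0 ≤ ((r:ℝ) - 1 - (m':ℝ)) * ((r:ℝ) * x - V) / ((r:ℝ) * ((r:ℝ) - 1)) :=
          div_nonneg hnum (by positivity)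
        linarith
    rw [hsplit]
    push_cast
    linarith [key, hw''ineq]

lemma exists_subset_beta (hmono : IsMonotoneFn f) (hsub : IsSubmodularFn f)
    (k m : ℕ) (hk : 1 ≤ k) (w B : Finset α) (hcard : w.card ≤ k) :
    ∃ w' : Finset α, w' ⊆ w ∧ w'.card ≤ min k m ∧
      min ((m : ℝ) / k) 1 * marg f w B ≤ marg f w' B := by
  rcases Finset.eq_empty_or_nonempty w with rfl | hw
  · refine ⟨∅, Finset.Subset.refl _, by simp, ?_⟩
    simp [marg]
  · have hr1 : 1 ≤ w.card := Finset.card_pos.2 hw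
    obtain ⟨w', hsub', hcard', hineq⟩ :=
      exists_subset_frac hmono hsub (min m w.card) w B (min_le_right _ _)
    refine ⟨w', hsub', ?_, ?_⟩
    · rw [hcard']
      omega
    · refine le_trans ?_ hineq
      have hV : 0 ≤ marg f w B := marg_nonneg hmono w B
      have hβ : min ((m : ℝ) / k) 1 ≤ ((min m w.card : ℕ) : ℝ) / (w.card : ℝ) := by
        have hrpos : (0:ℝ) < (w.card : ℝ) := by exact_mod_cast hr1
        have hkpos : (0:ℝ) < (k : ℝ) := by exact_mod_cast hk
        rcases le_or_gt m w.card with hmr | hmr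
        · rw [min_eq_left hmr]
          refine le_trans (min_le_left _ _) ?_
          apply div_le_div_of_nonneg_left (by positivity) hrpos
          exact_mod_cast hcard
        · rw [min_eq_right (le_of_lt hmr)]
          rw [div_self (ne_of_gt hrpos)]
          exact min_le_right _ _
      exact mul_le_mul_of_nonneg_right hβ hV

lemma pref_succ (x : ℕ → Finset α) (i : ℕ) : pref x (i+1) = x i ∪ pref x i := by
  simp [pref, Finset.range_add_one]

lemma pref_mono (x : ℕ → Finset α) {i j : ℕ} (h : i ≤ j) : pref x i ⊆ pref x j :=
  Finset.biUnion_subset_biUnion_of_subset_left _ (Finset.range_subset_range.2 h)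

lemma f_pref (hnorm : f ∅ = 0) (x : ℕ → Finset α) (n : ℕ) :
    f (pref x n) = ∑ i ∈ Finset.range n, marg f (x i) (pref x i) := by
  induction n with
  | zero => simp [pref, hnorm]
  | succ n ih =>
    rw [pref_succ, Finset.sum_range_succ, ← ih, marg]
    ring

lemma ico_telescope (f : Finset α → ℝ) (y : ℕ → Finset α) (C : Finset α) :
    ∀ (d j : ℕ),
    f ((Finset.Ico j (j+d)).biUnion y ∪ C) =
      f C + ∑ i ∈ Finset.Ico j (j+d),
        marg f (y i) ((Finset.Ico (i+1) (j+d)).biUnion y ∪ C) := by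
  intro d
  induction d with
  | zero => intro j; simp
  | succ d ih =>
    intro j
    have he : j + (d+1) = (j+1) + d := by omega
    have hins : Finset.Ico j (j + (d+1)) = insert j (Finset.Ico (j+1) (j + (d+1))) := by
      ext b
      simp only [Finset.mem_Ico, Finset.mem_insert]
      omega
    have hnotmem : j ∉ Finset.Ico (j+1) (j + (d+1)) := by simp
    rw [hins, Finset.sum_insert hnotmem, Finset.biUnion_insert]
    have hIH := ih (j+1)
    rw [← he] at hIH
    rw [Finset.union_assoc]
    have key : f (y j ∪ ((Finset.Ico (j+1) (j+(d+1))).biUnion y ∪ C)) =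
        marg f (y j) ((Finset.Ico (j+1) (j+(d+1))).biUnion y ∪ C) +
          f ((Finset.Ico (j+1) (j+(d+1))).biUnion y ∪ C) := by
      simp [marg]
    rw [key, hIH]
    ring

end AuxLemmas

lemma key_arith (β : ℝ) (hβ : 0 ≤ β) :
    ∀ (N : ℕ) (a t : ℕ → ℝ), (∀ i, i ≤ N → 0 ≤ a i) →
    (∀ i, i < N → 0 ≤ t i ∧ t i ≤ a i ∧ β * t i ≤ a (i+1)) →
    (∑ i ∈ Finset.range (N+1), β^i) * (∑ i ∈ Finset.range N, t i) ≤
      (∑ i ∈ Finset.range N, β^i) * (∑ i ∈ Finset.range (N+1), a i) := by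
  intro N
  induction N with
  | zero => intro a t ha ht; simp
  | succ N ih =>
    intro a t ha ht
    have IH := ih (fun i => a (i+1)) (fun i => t (i+1))
      (fun i hi => ha (i+1) (by omega)) (fun i hi => ht (i+1) (by omega))
    have hσ1 : 0 ≤ ∑ i ∈ Finset.range (N+1), β^i :=
      Finset.sum_nonneg fun i _ => pow_nonneg hβ i
    have hβN : 0 ≤ β^N := pow_nonneg hβ N
    have hT : ∑ i ∈ Finset.range (N+1), t i = (∑ i ∈ Finset.range N, t (i+1)) + t 0 :=
      Finset.sum_range_succ' t N
    have hA : ∑ i ∈ Finset.range (N+2), a i = (∑ i ∈ Finset.range (N+1), a (i+1)) + a 0 :=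
      Finset.sum_range_succ' a (N+1)
    have hA' : ∑ i ∈ Finset.range (N+1), a (i+1) = (∑ i ∈ Finset.range N, a (i+2)) + a 1 :=
      Finset.sum_range_succ' (fun i => a (i+1)) N
    have hσ2 : ∑ i ∈ Finset.range (N+2), β^i = (∑ i ∈ Finset.range (N+1), β^i) + β^(N+1) :=
      Finset.sum_range_succ _ _
    have hσ1e : ∑ i ∈ Finset.range (N+1), β^i = (∑ i ∈ Finset.range N, β^i) + β^N :=
      Finset.sum_range_succ _ _
    have p1 : (∑ i ∈ Finset.range (N+1), β^i) * t 0 ≤ (∑ i ∈ Finset.range (N+1), β^i) * a 0 :=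
      mul_le_mul_of_nonneg_left (ht 0 (by omega)).2.1 hσ1
    have p2 : β^(N+1) * t 0 ≤ β^N * a 1 := by
      have h := (ht 0 (by omega)).2.2
      calc β^(N+1) * t 0 = β^N * (β * t 0) := by ring
        _ ≤ β^N * a 1 := mul_le_mul_of_nonneg_left h hβN
    have p4 : β^(N+1) * (∑ i ∈ Finset.range N, t (i+1)) ≤
        β^N * (∑ i ∈ Finset.range N, a (i+2)) := by
      have hs : ∑ i ∈ Finset.range N, (β * t (i+1)) ≤ ∑ i ∈ Finset.range N, a (i+2) :=
        Finset.sum_le_sum fun i hi =>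
          (ht (i+1) (by have := Finset.mem_range.1 hi; omega)).2.2
      calc β^(N+1) * (∑ i ∈ Finset.range N, t (i+1))
          = β^N * (∑ i ∈ Finset.range N, (β * t (i+1))) := by
            rw [Finset.mul_sum, Finset.mul_sum]
            refine Finset.sum_congr rfl fun i _ => by ring
        _ ≤ β^N * (∑ i ∈ Finset.range N, a (i+2)) := mul_le_mul_of_nonneg_left hs hβN
    rw [hA'] at IH
    rw [hσ2, hT, hA, hA']
    set s0 := ∑ i ∈ Finset.range N, β^i with hs0
    set s1 := ∑ i ∈ Finset.range (N+1), β^i with hs1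
    set bN := β^N with hbN
    set b1 := β^(N+1) with hb1
    set T' := ∑ i ∈ Finset.range N, t (i+1) with hT'
    set Sa2 := ∑ i ∈ Finset.range N, a (i+2) with hSa2
    calc (s1 + b1) * (T' + t 0) = s1*T' + s1*(t 0) + b1*T' + b1*(t 0) := by ring
      _ ≤ (s0*(Sa2 + a 1)) + s1*(a 0) + bN*Sa2 + bN*(a 1) := by linarith [IH, p1, p2, p4]
      _ = s1 * ((Sa2 + a 1) + a 0) := by rw [hσ1e]; ring

/-- Worst-case lower bound for the augmented greedy algorithm (Theorem 1, lower bound). -/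
theorem stmt1 [DecidableEq α] [Fintype α] (f : Finset α → ℝ)
    (hnorm : f ∅ = 0) (hmono : IsMonotoneFn f) (hsub : IsSubmodularFn f)
    (n k m : ℕ) (hn : 2 ≤ n) (hk : 1 ≤ k)
    (Ss x z : ℕ → Finset α) (hag : AugGreedy f Ss k m n x z) :
    (∀ y : ℕ → Finset α, (∀ i < n, y i ⊆ Ss i ∧ (y i).card ≤ k) →
      f (pref x n) ≥ f (pref y n) /
        (2 - (min ((m : ℝ) / k) 1) ^ (n - 1) / ∑ i ∈ Finset.range n, (min ((m : ℝ) / k) 1) ^ i)) ∧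
    f (pref x n) ≥ OPTval f Ss n k /
      (2 - (min ((m : ℝ) / k) 1) ^ (n - 1) / ∑ i ∈ Finset.range n, (min ((m : ℝ) / k) 1) ^ i) := by
  set β : ℝ := min ((m : ℝ) / k) 1 with hβdef
  have hβ0 : 0 ≤ β := le_min (by positivity) zero_le_one
  set N : ℕ := n - 1 with hNdef
  have hnN : n = N + 1 := by omega
  set σ : ℝ := ∑ i ∈ Finset.range n, β ^ i with hσdef
  have hσ'σ : σ = (∑ i ∈ Finset.range N, β ^ i) + β ^ N := by
    rw [hσdef, hnN, Finset.sum_range_succ]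
  have hσ'0 : 0 ≤ ∑ i ∈ Finset.range N, β ^ i :=
    Finset.sum_nonneg fun i _ => pow_nonneg hβ0 i
  have hσ1 : 1 ≤ σ := by
    have h0 : β ^ 0 ≤ σ := by
      rw [hσdef]
      exact Finset.single_le_sum (f := fun i => β ^ i)
        (fun i _ => pow_nonneg hβ0 i) (Finset.mem_range.2 (by omega))
    simpa using h0
  have hσpos : 0 < σ := by linarith
  set D : ℝ := 2 - β ^ N / σ with hDdef
  have hD : D = 1 + (∑ i ∈ Finset.range N, β ^ i) / σ := by
    rw [hDdef]
    field_simp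
    linarith [hσ'σ]
  have hDpos : 0 < D := by
    rw [hD]
    have := div_nonneg hσ'0 hσpos.le
    linarith
  have main : ∀ y : ℕ → Finset α, (∀ i < n, y i ⊆ Ss i ∧ (y i).card ≤ k) →
      f (pref y n) ≤ f (pref x n) * D := by
    intro y hy
    set a : ℕ → ℝ := fun i => marg f (x i) (pref x i) with hadef
    set C : Finset α := pref x N with hCdef
    set t : ℕ → ℝ := fun i => marg f (y i) ((Finset.Ico (i+1) N).biUnion y ∪ C) with htdef
    have hG : ∀ i, i < n → ∀ c : Finset α, c ⊆ Ss i ∪ pref z i → c.card ≤ k →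
        marg f c (pref x i) ≤ a i := by
      intro i hi c hc hcard
      have h := ((hag i hi).1).2.2 c hc hcard
      exact sub_le_sub_right h _
    have hyfeas : ∀ i, i < n → marg f (y i) (pref x i) ≤ a i := by
      intro i hi
      exact hG i hi (y i) ((hy i hi).1.trans Finset.subset_union_left) (hy i hi).2
    have hβstep : ∀ i, i + 1 < n → β * marg f (y i) (pref x (i+1)) ≤ a (i+1) := by
      intro i hi
      obtain ⟨w', hw'sub, hw'card, hw'ineq⟩ :=
        exists_subset_beta hmono hsub k m hk (y i) (pref x (i+1)) (hy i (by omega)).2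
      obtain ⟨zk, zr, hzeq, hzksub, hzkcard, hzopt, _, _⟩ := (hag i (by omega)).2
      have h1 : marg f w' (pref x (i+1)) ≤ marg f zk (pref x (i+1)) :=
        hzopt w' (hw'sub.trans (hy i (by omega)).1) hw'card
      have h2 : marg f zk (pref x (i+1)) ≤ a (i+1) := by
        apply hG (i+1) hi
        · refine Finset.Subset.trans ?_ Finset.subset_union_right
          refine Finset.Subset.trans ?_
            (Finset.subset_biUnion_of_mem z (Finset.mem_range.2 (Nat.lt_succ_self i)))
          rw [hzeq]
          exact Finset.subset_union_left
        · exact le_trans hzkcard (min_le_left _ _)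
      linarith [hw'ineq]
    have ht : ∀ i, i < N → 0 ≤ t i ∧ t i ≤ a i ∧ β * t i ≤ a (i+1) := by
      intro i hi
      refine ⟨marg_nonneg hmono _ _, ?_, ?_⟩
      · have hsub1 : pref x i ⊆ (Finset.Ico (i+1) N).biUnion y ∪ C :=
          (pref_mono x (by omega : i ≤ N)).trans Finset.subset_union_right
        exact le_trans (marg_mono_base hmono hsub hsub1 (y i)) (hyfeas i (by omega))
      · have hsub2 : pref x (i+1) ⊆ (Finset.Ico (i+1) N).biUnion y ∪ C :=
          (pref_mono x (by omega : i+1 ≤ N)).trans Finset.subset_union_right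
        have h3 : t i ≤ marg f (y i) (pref x (i+1)) := marg_mono_base hmono hsub hsub2 (y i)
        have h4 := hβstep i (by omega)
        have h5 := mul_le_mul_of_nonneg_left h3 hβ0
        linarith
    have htel : f ((Finset.range N).biUnion y ∪ C) = f C + ∑ i ∈ Finset.range N, t i := by
      have h := ico_telescope f y C N 0
      simp only [Nat.zero_add] at h
      rw [Finset.range_eq_Ico]
      exact h
    have hfx : f (pref x n) = ∑ i ∈ Finset.range n, a i := f_pref hnorm x n
    have hfC : f C = ∑ i ∈ Finset.range N, a i := f_pref hnorm x N
    have hchain : f (pref y n) ≤ (∑ i ∈ Finset.range n, a i) + ∑ i ∈ Finset.range N, t i := by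
      have hYsub : pref y n ⊆ y N ∪ ((Finset.range N).biUnion y ∪ C) := by
        rw [hnN]
        unfold pref
        rw [Finset.range_add_one, Finset.biUnion_insert]
        exact Finset.union_subset_union_right Finset.subset_union_left
      have e1 : f (pref y n) ≤ f (y N ∪ ((Finset.range N).biUnion y ∪ C)) := hmono _ _ hYsub
      have e2 : f (y N ∪ ((Finset.range N).biUnion y ∪ C)) =
          marg f (y N) ((Finset.range N).biUnion y ∪ C) +
            f ((Finset.range N).biUnion y ∪ C) := by
        simp [marg]
      have e3 : marg f (y N) ((Finset.range N).biUnion y ∪ C) ≤ marg f (y N) C :=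
        marg_mono_base hmono hsub Finset.subset_union_right (y N)
      have e4 : marg f (y N) C ≤ a N := hyfeas N (by omega)
      have e5 : ∑ i ∈ Finset.range n, a i = (∑ i ∈ Finset.range N, a i) + a N := by
        rw [hnN, Finset.sum_range_succ]
      rw [e2, htel] at e1
      linarith
    have hkey := key_arith β hβ0 N a t (fun i _ => marg_nonneg hmono _ _) ht
    rw [← hnN] at hkey
    rw [← hσdef] at hkey
    have hTA : (∑ i ∈ Finset.range N, t i) ≤
        (∑ i ∈ Finset.range N, β ^ i) / σ * (∑ i ∈ Finset.range n, a i) := by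
      rw [div_mul_eq_mul_div, le_div_iff₀ hσpos]
      linarith [hkey]
    have hAD : f (pref x n) * D = (∑ i ∈ Finset.range n, a i) +
        (∑ i ∈ Finset.range N, β ^ i) / σ * (∑ i ∈ Finset.range n, a i) := by
      rw [hfx, hD]
      ring
    rw [hAD]
    linarith [hchain, hTA]
  constructor
  · intro y hy
    rw [ge_iff_le, div_le_iff₀ hDpos]
    exact main y hy
  · rw [ge_iff_le, div_le_iff₀ hDpos]
    unfold OPTval
    apply Finset.sup'_le
    intro yf hyf
    have hprop := (Finset.mem_filter.1 hyf).2
    set y' : ℕ → Finset α := fun i => if h : i < n then yf ⟨i, h⟩ else ∅ with hy'def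
    have hy' : ∀ i < n, y' i ⊆ Ss i ∧ (y' i).card ≤ k := by
      intro i hi
      simp only [hy'def, dif_pos hi]
      exact hprop ⟨i, hi⟩
    have hun : Finset.univ.biUnion (fun i : Fin n => yf i) = pref y' n := by
      unfold pref
      ext b
      simp only [Finset.mem_biUnion, Finset.mem_univ, true_and, Finset.mem_range]
      constructor
      · rintro ⟨i, hb⟩
        refine ⟨i.1, i.2, ?_⟩
        simp only [hy'def, dif_pos i.2]
        simpa using hb
      · rintro ⟨j, hj, hb⟩
        refine ⟨⟨j, hj⟩, ?_⟩
        simpa only [hy'def, dif_pos hj] using hb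
    rw [hun]
    exact main y' hy'
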